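/- Let D ⊂ ℝ^d be compact and convex with non-empty interior, μ a probability measure with support D, and V an N-dimensional subspace of L²_μ(D) with orthonormal basis v_1, …, v_N of twice continuously differentiable functions, with R_μ(V) := sup_{x∈D}(Σ_i ‖∇v_i(x)‖²)^{1/2} finite. Fix k > 2 and r > 1, and let 𝒩 ⊂ D be a (k R_μ(V))^{-1}-covering of D (i.e., D ⊆ ∪_{y∈𝒩} B_η(y) with η = (k R_μ(V))^{-1}) with |𝒩| ≥ N. Let α be the measure-density constant of D at scale η, i.e., a constant with vol(B_s(x) ∩ D) ≥ α · vol(B_s(x)) for all x ∈ D and 0 < s ≤ η. If 𝒜 consists of M ≥ α^{-1}(r+1)|𝒩| log|𝒩| i.i.d. samples from the uniform probability measure on D, then with probability at least 1 − N^{-r}, every v ∈ V satisfies ‖v‖_∞ ≤ (k/(k−2)) · ‖v‖_{∞,𝒜}. -/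

import Mathlib

open MeasureTheory ProbabilityTheory Metric
open scoped ENNReal

/-!
Write `g = ∑ i, c i * v i`. Orthonormality gives `‖c‖₂² = ∫ g² dμ ≤ ‖g‖_∞²`, and Cauchy–Schwarz
bounds `‖∇g‖` on `D` by `‖c‖₂ R_μ(V) ≤ ‖g‖_∞ R_μ(V)`, so `g` is `‖g‖_∞ R_μ(V)`-Lipschitz on the
convex set `D`. If every `B_η(y) ∩ D`, `y ∈ 𝒩`, contains a sample, a maximiser of `|g|` lies within
`2η = 2 / (k R_μ(V))` of a sample, whence `‖g‖_∞ ≤ ‖g‖_{∞,𝒜} + (2/k) ‖g‖_∞`.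
By the covering and density assumptions each `B_η(y) ∩ D` has uniform measure at least `α / |𝒩|`,
so by independence and a union bound some ball is missed with probability at most
`|𝒩| (1 - α/|𝒩|)^M ≤ |𝒩| exp (-α M / |𝒩|) ≤ |𝒩|^(-r) ≤ N^(-r)`.
-/

section OrthonormalSystem

variable {E : Type*} {ι : Type*}

lemma eq_of_orthonormal_of_ae_eq_const [MeasurableSpace E] {μ : Measure E} [IsProbabilityMeasure μ]
    [DecidableEq ι] {v : ι → E → ℝ}
    (horth : ∀ i j, ∫ x, v i x * v j x ∂μ = if i = j then 1 else 0) {a : ι → ℝ}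
    (ha : ∀ i, v i =ᵐ[μ] fun _ => a i) (i j : ι) : i = j := by
  have hprod : ∀ i j, ∫ x, v i x * v j x ∂μ = a i * a j := fun i j =>
    (integral_congr_ae ((ha i).mul (ha j))).trans (by simp)
  by_contra hij
  have hii := horth i i
  have hjj := horth j j
  have hij' := horth i j
  simp only [hprod, if_true, if_neg hij] at hii hjj hij'
  nlinarith

variable [Fintype ι]

lemma norm_sum_smul_le_sqrt_mul_sqrt {F : Type*} [NormedAddCommGroup F] [NormedSpace ℝ F]
    (c : ι → ℝ) (f : ι → F) :
    ‖∑ i, c i • f i‖ ≤ √(∑ i, c i ^ 2) * √(∑ i, ‖f i‖ ^ 2) :=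
  calc ‖∑ i, c i • f i‖ ≤ ∑ i, |c i| * ‖f i‖ := by
        simpa only [norm_smul, Real.norm_eq_abs] using norm_sum_le Finset.univ fun i => c i • f i
    _ ≤ √(∑ i, |c i| ^ 2) * √(∑ i, ‖f i‖ ^ 2) := Real.sum_mul_le_sqrt_mul_sqrt _ _ _
    _ = √(∑ i, c i ^ 2) * √(∑ i, ‖f i‖ ^ 2) := by simp only [sq_abs]

section Orthonormal

variable [MeasurableSpace E] {μ : Measure E} [DecidableEq ι] {v : ι → E → ℝ}

lemma integral_sum_mul_sq_of_orthonormal (hL2 : ∀ i, MemLp (v i) 2 μ)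
    (horth : ∀ i j, ∫ x, v i x * v j x ∂μ = if i = j then 1 else 0) (c : ι → ℝ) :
    ∫ x, (∑ i, c i * v i x) ^ 2 ∂μ = ∑ i, c i ^ 2 := by
  have hint : ∀ i j, Integrable (fun x => c i * c j * (v i x * v j x)) μ :=
    fun i j => ((hL2 i).integrable_mul (hL2 j)).const_mul _
  calc ∫ x, (∑ i, c i * v i x) ^ 2 ∂μ
      = ∫ x, ∑ i, ∑ j, c i * c j * (v i x * v j x) ∂μ := by
        congr with x
        rw [sq, Finset.sum_mul_sum]
        exact Finset.sum_congr rfl fun i _ => Finset.sum_congr rfl fun j _ => by ring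
    _ = ∑ i, ∑ j, c i * c j * ∫ x, v i x * v j x ∂μ := by
        rw [integral_finsetSum _ fun i _ => integrable_finsetSum _ fun j _ => hint i j]
        simp only [integral_finsetSum _ fun j _ => hint _ j, integral_const_mul]
    _ = ∑ i, c i ^ 2 := by simp [horth, sq]

lemma sum_sq_le_sq_of_ae_abs_le [IsProbabilityMeasure μ] (hL2 : ∀ i, MemLp (v i) 2 μ)
    (horth : ∀ i j, ∫ x, v i x * v j x ∂μ = if i = j then 1 else 0) (c : ι → ℝ) {b : ℝ}
    (hb : ∀ᵐ x ∂μ, |∑ i, c i * v i x| ≤ b) :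
    ∑ i, c i ^ 2 ≤ b ^ 2 := by
  rw [← integral_sum_mul_sq_of_orthonormal hL2 horth c]
  calc ∫ x, (∑ i, c i * v i x) ^ 2 ∂μ ≤ ∫ _, b ^ 2 ∂μ :=
        integral_mono_of_nonneg (ae_of_all _ fun x => sq_nonneg _) (integrable_const _)
          (hb.mono fun x hx => sq_le_sq' (abs_le.1 hx).1 (abs_le.1 hx).2)
    _ = b ^ 2 := by simp

end Orthonormal

section Gradient

variable [NormedAddCommGroup E] [NormedSpace ℝ E] {v : ι → E → ℝ} {D : Set E} {R : ℝ}

lemma abs_sum_mul_sub_le (hv : ∀ i, Differentiable ℝ (v i)) (hD : Convex ℝ D)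
    (hR : ∀ x ∈ D, √(∑ i, ‖fderiv ℝ (v i) x‖ ^ 2) ≤ R) (c : ι → ℝ) {x a : E}
    (hx : x ∈ D) (ha : a ∈ D) :
    |∑ i, c i * v i x - ∑ i, c i * v i a| ≤ √(∑ i, c i ^ 2) * R * ‖x - a‖ := by
  have hder : ∀ x, HasFDerivAt (fun x => ∑ i, c i * v i x) (∑ i, c i • fderiv ℝ (v i) x) x :=
    fun x => HasFDerivAt.fun_sum fun i _ => ((hv i x).hasFDerivAt).const_mul (c i)
  have hgrad : ∀ x ∈ D, ‖fderiv ℝ (fun x => ∑ i, c i * v i x) x‖ ≤ √(∑ i, c i ^ 2) * R :=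
    fun x hx => (hder x).fderiv ▸ (norm_sum_smul_le_sqrt_mul_sqrt c _).trans
      (mul_le_mul_of_nonneg_left (hR x hx) (Real.sqrt_nonneg _))
  simpa only [Real.norm_eq_abs] using
    hD.norm_image_sub_le_of_norm_fderiv_le (fun w _ => (hder w).differentiableAt) hgrad ha hx

lemma norm_fderiv_le_of_sqrt_sum_le (hR : ∀ x ∈ D, √(∑ i, ‖fderiv ℝ (v i) x‖ ^ 2) ≤ R)
    (i : ι) {x : E} (hx : x ∈ D) : ‖fderiv ℝ (v i) x‖ ≤ R :=
  calc ‖fderiv ℝ (v i) x‖ = √(‖fderiv ℝ (v i) x‖ ^ 2) := (Real.sqrt_sq (norm_nonneg _)).symm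
    _ ≤ √(∑ j, ‖fderiv ℝ (v j) x‖ ^ 2) :=
        Real.sqrt_le_sqrt (Finset.single_le_sum (fun j _ => sq_nonneg ‖fderiv ℝ (v j) x‖)
          (Finset.mem_univ i))
    _ ≤ R := hR x hx

-- Otherwise all `v i` are constant on `D`, and two orthonormal functions cannot both be.
lemma pos_of_sqrt_sum_norm_fderiv_le [MeasurableSpace E] {μ : Measure E} [IsProbabilityMeasure μ]
    [DecidableEq ι] (hv : ∀ i, Differentiable ℝ (v i)) (hD : Convex ℝ D) (hDsupp : μ Dᶜ = 0)
    {x₀ : E} (hx₀ : x₀ ∈ D) (horth : ∀ i j, ∫ x, v i x * v j x ∂μ = if i = j then 1 else 0)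
    {i j : ι} (hij : i ≠ j) (hR : ∀ x ∈ D, √(∑ i, ‖fderiv ℝ (v i) x‖ ^ 2) ≤ R) : 0 < R := by
  by_contra! hR0
  refine hij (eq_of_orthonormal_of_ae_eq_const horth (a := fun l => v l x₀) (fun l => ?_) i j)
  filter_upwards [mem_ae_iff.2 hDsupp] with x hx
  have hconst := hD.norm_image_sub_le_of_norm_fderiv_le (fun w _ => (hv l w))
    (fun w hw => norm_fderiv_le_of_sqrt_sum_le hR l hw) hx₀ hx
  have : ‖v l x - v l x₀‖ ≤ 0 := hconst.trans (mul_nonpos_of_nonpos_of_nonneg hR0 (norm_nonneg _))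
  exact sub_eq_zero.1 (norm_le_zero_iff.1 this)

end Gradient

section Norming

variable [NormedAddCommGroup E] [NormedSpace ℝ E] [MeasurableSpace E] {μ : Measure E}
  [IsProbabilityMeasure μ] [DecidableEq ι] {v : ι → E → ℝ} {D : Set E} {R k η : ℝ}

lemma abs_le_div_mul_abs_of_isMaxOn (hv : ∀ i, Differentiable ℝ (v i))
    (hL2 : ∀ i, MemLp (v i) 2 μ)
    (horth : ∀ i j, ∫ x, v i x * v j x ∂μ = if i = j then 1 else 0)
    (hD : Convex ℝ D) (hDsupp : μ Dᶜ = 0)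
    (hR : ∀ x ∈ D, √(∑ i, ‖fderiv ℝ (v i) x‖ ^ 2) ≤ R) (hk : 2 < k) (hRη : k * (R * η) ≤ 1)
    (c : ι → ℝ) {z a : E} (hz : z ∈ D) (hmax : IsMaxOn (fun x => |∑ i, c i * v i x|) D z)
    (ha : a ∈ D) (hza : ‖z - a‖ ≤ 2 * η) :
    |∑ i, c i * v i z| ≤ k / (k - 2) * |∑ i, c i * v i a| := by
  have hsq : ∑ i, c i ^ 2 ≤ |∑ i, c i * v i z| ^ 2 :=
    sum_sq_le_sq_of_ae_abs_le hL2 horth c <| by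
      filter_upwards [mem_ae_iff.2 hDsupp] with x hx using hmax hx
  have hsqrt : √(∑ i, c i ^ 2) ≤ |∑ i, c i * v i z| :=
    (Real.sqrt_le_sqrt hsq).trans_eq (Real.sqrt_sq (abs_nonneg _))
  have hR0 : 0 ≤ R := (Real.sqrt_nonneg _).trans (hR z hz)
  have hclose : |∑ i, c i * v i z| - |∑ i, c i * v i a| ≤ √(∑ i, c i ^ 2) * R * (2 * η) :=
    (abs_sub_abs_le_abs_sub _ _).trans <| (abs_sum_mul_sub_le hv hD hR c hz ha).trans <|
      mul_le_mul_of_nonneg_left hza (by positivity)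
  have hsmall : k * (√(∑ i, c i ^ 2) * R * (2 * η)) ≤ 2 * |∑ i, c i * v i z| :=
    calc k * (√(∑ i, c i ^ 2) * R * (2 * η)) = 2 * √(∑ i, c i ^ 2) * (k * (R * η)) := by ring
      _ ≤ 2 * √(∑ i, c i ^ 2) * 1 := mul_le_mul_of_nonneg_left hRη (by positivity)
      _ ≤ 2 * |∑ i, c i * v i z| := by linarith
  rw [div_mul_eq_mul_div, le_div_iff₀ (by linarith)]
  nlinarith

theorem iSup_abs_sum_mul_le_of_forall_exists_mem {κ : Type*} [Finite κ]
    (hv : ∀ i, Differentiable ℝ (v i)) (hL2 : ∀ i, MemLp (v i) 2 μ)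
    (horth : ∀ i j, ∫ x, v i x * v j x ∂μ = if i = j then 1 else 0)
    (hDc : IsCompact D) (hD : Convex ℝ D) (hDsupp : μ Dᶜ = 0)
    (hR : ∀ x ∈ D, √(∑ i, ‖fderiv ℝ (v i) x‖ ^ 2) ≤ R) (hk : 2 < k) (hRη : k * (R * η) ≤ 1)
    {𝒩 : Finset E} (hcover : D ⊆ ⋃ y ∈ 𝒩, closedBall y η) (p : κ → E)
    (hp : ∀ y ∈ 𝒩, ∃ m, p m ∈ closedBall y η ∩ D) (c : ι → ℝ) :
    (⨆ x ∈ D, |∑ i, c i * v i x|) ≤ k / (k - 2) * ⨆ m, |∑ i, c i * v i (p m)| := by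
  have hk' : 0 ≤ k / (k - 2) := div_nonneg (by linarith) (by linarith)
  have hrhs : 0 ≤ k / (k - 2) * ⨆ m, |∑ i, c i * v i (p m)| :=
    mul_nonneg hk' (Real.iSup_nonneg fun _ => abs_nonneg _)
  refine Real.iSup_le (fun x => Real.iSup_le (fun hx => ?_) hrhs) hrhs
  have hcont : Continuous fun x => |∑ i, c i * v i x| :=
    (continuous_finsetSum _ fun i _ => continuous_const.mul (hv i).continuous).abs
  obtain ⟨z, hz, hmax⟩ := hDc.exists_isMaxOn ⟨x, hx⟩ hcont.continuousOn
  obtain ⟨y, hy, hzy⟩ : ∃ y ∈ 𝒩, z ∈ closedBall y η := by simpa using hcover hz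
  obtain ⟨m, hmy, hmD⟩ := hp y hy
  have hdist : ‖z - p m‖ ≤ 2 * η := by
    rw [← dist_eq_norm]
    linarith [dist_triangle_right z (p m) y, mem_closedBall.1 hzy, mem_closedBall.1 hmy]
  calc |∑ i, c i * v i x| ≤ |∑ i, c i * v i z| := hmax hx
    _ ≤ k / (k - 2) * |∑ i, c i * v i (p m)| :=
        abs_le_div_mul_abs_of_isMaxOn hv hL2 horth hD hDsupp hR hk hRη c hz hmax hmD hdist
    _ ≤ k / (k - 2) * ⨆ m, |∑ i, c i * v i (p m)| :=
        mul_le_mul_of_nonneg_left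
          (le_ciSup (f := fun m => |∑ i, c i * v i (p m)|) (Set.finite_range _).bddAbove m) hk'

end Norming

end OrthonormalSystem

lemma measure_exists_forall_notMem_le {Ω β γ κ : Type*} [MeasurableSpace Ω] {P : Measure Ω}
    [IsProbabilityMeasure P] [MeasurableSpace β] [Fintype κ] {X : κ → Ω → β}
    (hXmeas : ∀ m, Measurable (X m)) (hXindep : iIndepFun X P) (𝒩 : Finset γ) {S : γ → Set β}
    (hS : ∀ y, MeasurableSet (S y)) {q : ℝ≥0∞} (hq : ∀ y ∈ 𝒩, ∀ m, q ≤ P (X m ⁻¹' S y)) :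
    P {ω | ∃ y ∈ 𝒩, ∀ m, X m ω ∉ S y} ≤ 𝒩.card * (1 - q) ^ Fintype.card κ := by
  have hmiss : ∀ y ∈ 𝒩, P (⋂ m, X m ⁻¹' (S y)ᶜ) ≤ (1 - q) ^ Fintype.card κ := fun y hy =>
    calc P (⋂ m, X m ⁻¹' (S y)ᶜ) = ∏ m, P (X m ⁻¹' (S y)ᶜ) := by
          simpa using hXindep.measure_inter_preimage_eq_mul Finset.univ
            (sets := fun _ => (S y)ᶜ) fun m _ => (hS y).compl
      _ ≤ ∏ _m : κ, (1 - q) := Finset.prod_le_prod' fun m _ => by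
          rw [Set.preimage_compl, prob_compl_eq_one_sub ((hS y).preimage (hXmeas m))]
          exact tsub_le_tsub_left (hq y hy m) 1
      _ = (1 - q) ^ Fintype.card κ := by rw [Finset.prod_const, Finset.card_univ]
  calc P {ω | ∃ y ∈ 𝒩, ∀ m, X m ω ∉ S y} = P (⋃ y ∈ 𝒩, ⋂ m, X m ⁻¹' (S y)ᶜ) := by
        congr 1
        ext ω
        simp
    _ ≤ ∑ y ∈ 𝒩, P (⋂ m, X m ⁻¹' (S y)ᶜ) := measure_biUnion_finset_le _ _
    _ ≤ ∑ _y ∈ 𝒩, (1 - q) ^ Fintype.card κ := Finset.sum_le_sum hmiss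
    _ = 𝒩.card * (1 - q) ^ Fintype.card κ := by rw [Finset.sum_const, nsmul_eq_mul]

lemma ofReal_div_card_le_cond_closedBall_inter {E : Type*} [NormedAddCommGroup E]
    [MeasurableSpace E] [BorelSpace E] [ProperSpace E] (μ : Measure E) [μ.IsAddHaarMeasure]
    {D : Set E} (hD : MeasurableSet D) {𝒩 : Finset E} {η α : ℝ} (hη : 0 < η)
    (hcover : D ⊆ ⋃ y ∈ 𝒩, closedBall y η) {y : E}
    (hdens : ENNReal.ofReal α * μ (closedBall y η) ≤ μ (closedBall y η ∩ D)) :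
    ENNReal.ofReal α / 𝒩.card ≤ μ[closedBall y η ∩ D | D] := by
  have hball : ∀ x, μ (closedBall x η) = μ (closedBall 0 η) :=
    fun x => Measure.addHaar_closedBall_center μ x η
  have hD_le : μ D ≤ 𝒩.card * μ (closedBall 0 η) :=
    calc μ D ≤ μ (⋃ y ∈ 𝒩, closedBall y η) := measure_mono hcover
      _ ≤ ∑ y ∈ 𝒩, μ (closedBall y η) := measure_biUnion_finset_le _ _
      _ = 𝒩.card * μ (closedBall 0 η) := by simp [hball]
  have hB0 : μ (closedBall y η) ≠ 0 := (measure_closedBall_pos μ y hη).ne'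
  have hBtop : μ (closedBall y η) ≠ ∞ := measure_closedBall_lt_top.ne
  rw [cond_apply hD, Set.inter_comm, Set.inter_assoc, Set.inter_self, ← ENNReal.div_eq_inv_mul]
  calc ENNReal.ofReal α / 𝒩.card
      = ENNReal.ofReal α * μ (closedBall y η) / (𝒩.card * μ (closedBall y η)) :=
        (ENNReal.mul_div_mul_right _ _ hB0 hBtop).symm
    _ ≤ μ (closedBall y η ∩ D) / μ D := ENNReal.div_le_div hdens (hball y ▸ hD_le)

lemma one_sub_ofReal_pow_le (t : ℝ) (ht : 0 ≤ t) (M : ℕ) :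
    (1 - ENNReal.ofReal t) ^ M ≤ ENNReal.ofReal (Real.exp (-(t * M))) := by
  calc (1 - ENNReal.ofReal t) ^ M ≤ ENNReal.ofReal (Real.exp (-t)) ^ M := by
        gcongr
        rw [← ENNReal.ofReal_one, ← ENNReal.ofReal_sub _ ht]
        exact ENNReal.ofReal_le_ofReal (Real.one_sub_le_exp_neg t)
    _ = ENNReal.ofReal (Real.exp (-(t * M))) := by
        rw [← ENNReal.ofReal_pow (Real.exp_pos _).le, ← Real.exp_nat_mul]
        ring_nf

lemma mul_exp_neg_le_rpow_neg {n α r M : ℝ} (hn : 0 < n) (hα : 0 < α)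
    (hM : α⁻¹ * (r + 1) * n * Real.log n ≤ M) :
    n * Real.exp (-(α / n * M)) ≤ n ^ (-r) := by
  have hexp : (r + 1) * Real.log n ≤ α / n * M :=
    calc (r + 1) * Real.log n = α / n * (α⁻¹ * (r + 1) * n * Real.log n) := by field_simp
      _ ≤ α / n * M := mul_le_mul_of_nonneg_left hM (by positivity)
  calc n * Real.exp (-(α / n * M)) ≤ n * n ^ (-(r + 1)) := by
        rw [Real.rpow_def_of_pos hn]
        gcongr
        linarith
    _ = n ^ (-r) := by
        nth_rewrite 1 [← Real.rpow_one n]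
        rw [← Real.rpow_add hn]
        ring_nf

lemma natCast_mul_one_sub_pow_le_rpow_neg {n M : ℕ} (hn : 0 < n) {α r : ℝ} (hα : 0 < α)
    (hM : α⁻¹ * (r + 1) * n * Real.log n ≤ M) :
    (n : ℝ≥0∞) * (1 - ENNReal.ofReal α / n) ^ M ≤ ENNReal.ofReal ((n : ℝ) ^ (-r)) := by
  have hn' : (0 : ℝ) < n := Nat.cast_pos.2 hn
  rw [← ENNReal.ofReal_natCast n, ← ENNReal.ofReal_div_of_pos hn']
  calc ENNReal.ofReal n * (1 - ENNReal.ofReal (α / n)) ^ M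
      ≤ ENNReal.ofReal n * ENNReal.ofReal (Real.exp (-(α / n * M))) := by
        gcongr
        exact one_sub_ofReal_pow_le _ (by positivity) M
    _ = ENNReal.ofReal (n * Real.exp (-(α / n * M))) := (ENNReal.ofReal_mul hn'.le).symm
    _ ≤ ENNReal.ofReal ((n : ℝ) ^ (-r)) :=
        ENNReal.ofReal_le_ofReal (mul_exp_neg_le_rpow_neg hn' hα hM)

theorem prob_forall_exists_mem_closedBall_inter_ge {Ω E κ : Type*} [MeasurableSpace Ω]
    {P : Measure Ω} [IsProbabilityMeasure P] [NormedAddCommGroup E] [MeasurableSpace E]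
    [BorelSpace E] [ProperSpace E] (μ : Measure E) [μ.IsAddHaarMeasure] [Fintype κ]
    {X : κ → Ω → E} (hXmeas : ∀ m, Measurable (X m)) (hXindep : iIndepFun X P) {D : Set E}
    (hD : MeasurableSet D) (hXdist : ∀ m, P.map (X m) = μ[|D]) {𝒩 : Finset E}
    (h𝒩 : 𝒩.Nonempty) {η α r : ℝ} (hη : 0 < η) (hα : 0 < α)
    (hcover : D ⊆ ⋃ y ∈ 𝒩, closedBall y η)
    (hdens : ∀ y ∈ 𝒩, ENNReal.ofReal α * μ (closedBall y η) ≤ μ (closedBall y η ∩ D))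
    (hM : α⁻¹ * (r + 1) * 𝒩.card * Real.log 𝒩.card ≤ Fintype.card κ) :
    ENNReal.ofReal (1 - (𝒩.card : ℝ) ^ (-r)) ≤
      P {ω | ∀ y ∈ 𝒩, ∃ m, X m ω ∈ closedBall y η ∩ D} := by
  set good := {ω | ∀ y ∈ 𝒩, ∃ m, X m ω ∈ closedBall y η ∩ D}
  have hbad : P goodᶜ ≤ ENNReal.ofReal ((𝒩.card : ℝ) ^ (-r)) :=
    calc P goodᶜ = P {ω | ∃ y ∈ 𝒩, ∀ m, X m ω ∉ closedBall y η ∩ D} := by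
          congr 1; ext ω; simp [good]
      _ ≤ 𝒩.card * (1 - ENNReal.ofReal α / 𝒩.card) ^ Fintype.card κ :=
          measure_exists_forall_notMem_le hXmeas hXindep 𝒩
            (fun y => measurableSet_closedBall.inter hD) fun y hy m => by
              rw [← Measure.map_apply (hXmeas m) (measurableSet_closedBall.inter hD), hXdist m]
              exact ofReal_div_card_le_cond_closedBall_inter μ hD hη hcover (hdens y hy)
      _ ≤ ENNReal.ofReal ((𝒩.card : ℝ) ^ (-r)) :=
          natCast_mul_one_sub_pow_le_rpow_neg h𝒩.card_pos hα hM
  calc ENNReal.ofReal (1 - (𝒩.card : ℝ) ^ (-r)) = 1 - ENNReal.ofReal ((𝒩.card : ℝ) ^ (-r)) := by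
        rw [ENNReal.ofReal_sub _ (by positivity), ENNReal.ofReal_one]
    _ ≤ 1 - P goodᶜ := tsub_le_tsub_left hbad 1
    _ ≤ P good := by
        rw [tsub_le_iff_right, ← measure_univ (μ := P)]
        exact measure_univ_le_add_compl good

theorem stmt19_general {d N M : ℕ} {Ω : Type*} [MeasurableSpace Ω]
    (P : Measure Ω) [IsProbabilityMeasure P]
    (μ : Measure (EuclideanSpace ℝ (Fin d))) [IsProbabilityMeasure μ]
    (D : Set (EuclideanSpace ℝ (Fin d)))
    (hDcompact : IsCompact D) (hDconv : Convex ℝ D)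
    (hDsupp : μ Dᶜ = 0)
    (v : Fin N → EuclideanSpace ℝ (Fin d) → ℝ)
    (hC2 : ∀ i, ContDiff ℝ 2 (v i))
    (hL2 : ∀ i, MemLp (v i) 2 μ)
    (horth : ∀ i j, ∫ x, v i x * v j x ∂μ = if i = j then 1 else 0)
    (RV : ℝ)
    (hRV : IsLUB ((fun x => Real.sqrt (∑ i, ‖fderiv ℝ (v i) x‖ ^ 2)) '' D) RV)
    (k r : ℝ) (hk : 2 < k) (hr : 1 < r)
    (η : ℝ) (hη : η = (k * RV)⁻¹)
    (𝒩 : Finset (EuclideanSpace ℝ (Fin d))) (h𝒩D : ↑𝒩 ⊆ D)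
    (h𝒩cover : D ⊆ ⋃ y ∈ 𝒩, closedBall y η)
    (h𝒩card : N ≤ 𝒩.card)
    (α : ℝ) (hα : 0 < α)
    (hdens : ∀ x ∈ D, ∀ s : ℝ, 0 < s → s ≤ η →
      ENNReal.ofReal α * volume (closedBall x s) ≤ volume (closedBall x s ∩ D))
    (hM : (M : ℝ) ≥ α⁻¹ * (r + 1) * 𝒩.card * Real.log 𝒩.card)
    (X : Fin M → Ω → EuclideanSpace ℝ (Fin d))
    (hXmeas : ∀ m, Measurable (X m))
    (hXindep : iIndepFun X P)
    (hXdist : ∀ m, P.map (X m) = (volume D)⁻¹ • volume.restrict D) :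
    ENNReal.ofReal (1 - (N : ℝ) ^ (-r)) ≤
      P {ω | ∀ c : Fin N → ℝ,
        (⨆ x ∈ D, |∑ i, c i * v i x|) ≤
          (k / (k - 2)) * ⨆ m : Fin M, |∑ i, c i * v i (X m ω)|} := by
  rcases Nat.lt_or_ge N 2 with hN | hN
  · -- `N = 1` makes the bound `0`; `N = 0` makes `V = 0`, and `(0 : ℝ) ^ (-r) = 0`.
    interval_cases N
    · simp [(by linarith : r ≠ 0)]
    · simp
  have hv : ∀ i, Differentiable ℝ (v i) := fun i => (hC2 i).differentiable (by norm_num)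
  have hR : ∀ x ∈ D, √(∑ i, ‖fderiv ℝ (v i) x‖ ^ 2) ≤ RV := fun x hx => hRV.1 ⟨x, hx, rfl⟩
  obtain ⟨y₀, hy₀⟩ : 𝒩.Nonempty := Finset.card_pos.1 (by omega)
  have hRVpos : 0 < RV := pos_of_sqrt_sum_norm_fderiv_le hv hDconv hDsupp (h𝒩D hy₀)
    horth (i := ⟨0, by omega⟩) (j := ⟨1, by omega⟩) (by simp) hR
  have hηpos : 0 < η := by rw [hη]; positivity
  have hRη : k * (RV * η) ≤ 1 := by rw [hη, ← mul_assoc]; exact mul_inv_le_one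
  calc ENNReal.ofReal (1 - (N : ℝ) ^ (-r)) ≤ ENNReal.ofReal (1 - (𝒩.card : ℝ) ^ (-r)) :=
        ENNReal.ofReal_le_ofReal <| sub_le_sub_left (Real.rpow_le_rpow_of_nonpos
          (by positivity) (by exact_mod_cast h𝒩card) (by linarith)) 1
    _ ≤ P {ω | ∀ y ∈ 𝒩, ∃ m, X m ω ∈ closedBall y η ∩ D} :=
        prob_forall_exists_mem_closedBall_inter_ge volume hXmeas hXindep
          hDcompact.isClosed.measurableSet hXdist ⟨y₀, hy₀⟩ hηpos hα h𝒩cover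
          (fun y hy => hdens y (h𝒩D hy) η hηpos le_rfl) (by simpa using hM)
    _ ≤ _ := measure_mono fun ω hω c =>
        iSup_abs_sum_mul_le_of_forall_exists_mem hv hL2 horth hDcompact hDconv hDsupp hR hk hRη
          h𝒩cover (fun m => X m ω) hω c

/-- (Theorem: randomized admissible meshes from uniform sampling.)
Let `D ⊂ ℝ^d` be compact and convex with non-empty interior, `μ` a probability
measure supported on `D`, and `V` an `N`-dimensional subspace of `L²_μ(D)` with
orthonormal basis `v i` of twice continuously differentiable functions and finite
`R_μ(V) = sup_{x∈D} (∑ i ‖∇(v i)(x)‖²)^{1/2}`.  Fix `k > 2` and `r > 1`, let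
`𝒩 ⊂ D` be an `η = (k R_μ(V))⁻¹`-covering of `D` with `|𝒩| ≥ N`, and let `α > 0` be
a measure-density constant of `D` at scale `η`.  If `𝒜` consists of
`M ≥ α⁻¹ (r+1) |𝒩| log |𝒩|` i.i.d. samples from the uniform measure on `D`, then
with probability at least `1 − N^{−r}`, every `v ∈ V` satisfies
`‖v‖_∞ ≤ (k/(k−2)) ‖v‖_{∞,𝒜}`. -/
theorem stmt19 {d N M : ℕ} {Ω : Type*} [MeasurableSpace Ω]
    (P : Measure Ω) [IsProbabilityMeasure P]
    (μ : Measure (EuclideanSpace ℝ (Fin d))) [IsProbabilityMeasure μ]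
    (D : Set (EuclideanSpace ℝ (Fin d)))
    (hDcompact : IsCompact D) (hDconv : Convex ℝ D) (hDint : (interior D).Nonempty)
    (hDsupp : μ Dᶜ = 0)
    (v : Fin N → EuclideanSpace ℝ (Fin d) → ℝ)
    (hC2 : ∀ i, ContDiff ℝ 2 (v i))
    (hL2 : ∀ i, MemLp (v i) 2 μ)
    (horth : ∀ i j, ∫ x, v i x * v j x ∂μ = if i = j then 1 else 0)
    (RV : ℝ)
    (hRV : IsLUB ((fun x => Real.sqrt (∑ i, ‖fderiv ℝ (v i) x‖ ^ 2)) '' D) RV)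
    (k r : ℝ) (hk : 2 < k) (hr : 1 < r)
    (η : ℝ) (hη : η = (k * RV)⁻¹)
    (𝒩 : Finset (EuclideanSpace ℝ (Fin d))) (h𝒩D : ↑𝒩 ⊆ D)
    (h𝒩cover : D ⊆ ⋃ y ∈ 𝒩, closedBall y η)
    (h𝒩card : N ≤ 𝒩.card)
    (α : ℝ) (hα : 0 < α)
    (hdens : ∀ x ∈ D, ∀ s : ℝ, 0 < s → s ≤ η →
      ENNReal.ofReal α * volume (closedBall x s) ≤ volume (closedBall x s ∩ D))
    (hM : (M : ℝ) ≥ α⁻¹ * (r + 1) * 𝒩.card * Real.log 𝒩.card)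
    (X : Fin M → Ω → EuclideanSpace ℝ (Fin d))
    (hXmeas : ∀ m, Measurable (X m))
    (hXindep : iIndepFun X P)
    (hXdist : ∀ m, P.map (X m) = (volume D)⁻¹ • volume.restrict D) :
    ENNReal.ofReal (1 - (N : ℝ) ^ (-r)) ≤
      P {ω | ∀ c : Fin N → ℝ,
        (⨆ x ∈ D, |∑ i, c i * v i x|) ≤
          (k / (k - 2)) * ⨆ m : Fin M, |∑ i, c i * v i (X m ω)|} :=
  stmt19_general P μ D hDcompact hDconv hDsupp v hC2 hL2 horth RV hRV k r hk hr η hη 𝒩 h𝒩D h𝒩cover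
    h𝒩card α hα hdens hM X hXmeas hXindep hXdist
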